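/- arXiv:2001.02773 — 2 statements merged into one kernel-verified Lean document; each statement's English description precedes it below -/
import Mathlib

section
/- Let p = Σ_{m=1}^K π_m p_m be a finite mixture of nondegenerate multivariate Gaussian densities p_m on ℝ^n (π_m ≥ 0, Σ_m π_m = 1). Then there exist probability densities g_1, …, g_n on ℝ and a constant M < ∞ such that p(x) ≤ M · ∏_{i=1}^n g_i(x_i) for all x ∈ ℝ^n; in particular, sup_{x∈ℝ^n} p(x)/∏_i g_i(x_i) < ∞. -/
open MeasureTheory

-- lower bound lemma for posdef quadratic forms
lemma posdef_quad_lower {n : ℕ} {A : Matrix (Fin n) (Fin n) ℝ} (hA : A.PosDef) :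
    ∃ c : ℝ, 0 < c ∧ ∀ v : Fin n → ℝ, c * ∑ i, v i ^ 2 ≤ dotProduct v (A.mulVec v) := by
  rcases Nat.eq_zero_or_pos n with hn | hn
  · refine ⟨1, one_pos, fun v => ?_⟩
    subst hn
    simp [dotProduct]
  · set q : (Fin n → ℝ) → ℝ := fun v => dotProduct v (A.mulVec v) with hqdef
    have hqcont : Continuous q := by
      unfold q
      simp only [dotProduct, Matrix.mulVec]
      fun_prop
    set Sph : Set (Fin n → ℝ) := {v | ∑ i, v i ^ 2 = 1} with hSph
    have hclosed : IsClosed Sph := isClosed_eq (by fun_prop) continuous_const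
    have hsub : Sph ⊆ Metric.closedBall 0 1 := by
      intro v hv
      rw [Metric.mem_closedBall, dist_zero_right]
      rw [pi_norm_le_iff_of_nonneg zero_le_one]
      intro i
      rw [Real.norm_eq_abs, ← Real.sqrt_one, ← Real.sqrt_sq_eq_abs]
      apply Real.sqrt_le_sqrt
      calc v i ^ 2 ≤ ∑ j, v j ^ 2 :=
            Finset.single_le_sum (fun j _ => sq_nonneg (v j)) (Finset.mem_univ i)
        _ = 1 := hv
    have hcomp : IsCompact Sph :=
      (isCompact_closedBall 0 1).of_isClosed_subset hclosed hsub
    have hne : Sph.Nonempty := by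
      refine ⟨(Pi.single ⟨0, hn⟩ (1:ℝ) : Fin n → ℝ), ?_⟩
      simp [hSph, Pi.single_apply, apply_ite (fun t : ℝ => t ^ 2),
        Finset.sum_ite_eq']
    obtain ⟨v₀, hv₀S, hmin'⟩ := hcomp.exists_isMinOn hne hqcont.continuousOn
    have hmin : ∀ u ∈ Sph, q v₀ ≤ q u := fun u hu => hmin' hu
    have hv₀ne : v₀ ≠ 0 := by
      intro h
      rw [hSph] at hv₀S
      simp [h] at hv₀S
    have hc : 0 < q v₀ := by
      have := hA.dotProduct_mulVec_pos hv₀ne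
      simpa [hqdef] using this
    refine ⟨q v₀, hc, fun v => ?_⟩
    rcases eq_or_ne v 0 with rfl | hv
    · simp [hqdef]
    · have hsumpos : 0 < ∑ i, v i ^ 2 := by
        obtain ⟨i, hi⟩ := Function.ne_iff.mp hv
        refine Finset.sum_pos' (fun j _ => sq_nonneg _) ⟨i, Finset.mem_univ i, ?_⟩
        have h1 : 0 < |v i| ^ 2 := pow_pos (abs_pos.mpr hi) 2
        rwa [sq_abs] at h1
      set t : ℝ := Real.sqrt (∑ i, v i ^ 2) with htdef
      have ht : 0 < t := Real.sqrt_pos.mpr hsumpos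
      have ht2 : t ^ 2 = ∑ i, v i ^ 2 := Real.sq_sqrt hsumpos.le
      set u : Fin n → ℝ := t⁻¹ • v with hudef
      have huS : u ∈ Sph := by
        simp only [hSph, Set.mem_setOf_eq, hudef, Pi.smul_apply, smul_eq_mul, mul_pow,
          ← Finset.mul_sum]
        rw [← ht2]
        field_simp
      have hvu : v = t • u := by
        rw [hudef, smul_smul, mul_inv_cancel₀ ht.ne', one_smul]
      have hq : q v = t ^ 2 * q u := by
        rw [hvu, hqdef]
        simp only [smul_dotProduct, Matrix.mulVec_smul, dotProduct_smul,
          smul_eq_mul]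
        ring
      calc q v₀ * ∑ i, v i ^ 2 = q v₀ * t ^ 2 := by rw [ht2]
        _ ≤ q u * t ^ 2 := mul_le_mul_of_nonneg_right (hmin u huS) (sq_nonneg t)
        _ = q v := by rw [hq]; ring

/-- **A finite mixture of nondegenerate Gaussians is dominated by a product of univariate
probability densities.**  If `p = Σ_m π_m p_m` with each `p_m` a nondegenerate multivariate
Gaussian density on `ℝ^n`, then there exist probability densities `g 1, …, g n` on `ℝ` and a
finite constant `M` such that `p x ≤ M * ∏ i, g i (x i)` for all `x`. -/
theorem gaussian_mixture_dominated_by_product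
    {n : ℕ} (K : ℕ)
    (π : Fin K → ℝ) (hπ0 : ∀ m, 0 ≤ π m) (hπ1 : ∑ m, π m = 1)
    (μ : Fin K → Fin n → ℝ) (S : Fin K → Matrix (Fin n) (Fin n) ℝ)
    (hS : ∀ m, (S m).PosDef)
    (p : (Fin n → ℝ) → ℝ)
    (hp : ∀ x, p x = ∑ m, π m *
        ((2 * Real.pi) ^ (-(n : ℝ) / 2) * (S m).det ^ (-(1 : ℝ) / 2)
          * Real.exp (-(dotProduct (x - μ m) ((S m)⁻¹.mulVec (x - μ m))) / 2))) :
    ∃ (g : Fin n → ℝ → ℝ) (M : ℝ),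
      (∀ i t, 0 ≤ g i t) ∧ (∀ i, Measurable (g i)) ∧ (∀ i, ∫ t, g i t = 1) ∧
      ∀ x : Fin n → ℝ, p x ≤ M * ∏ i, g i (x i) := by
  have hK : 0 < K := by
    rcases Nat.eq_zero_or_pos K with h | h
    · subst h; simp at hπ1
    · exact h
  -- quadratic lower bounds for the inverse covariances
  choose c hc0 hc using fun m => posdef_quad_lower (hS m).inv
  obtain ⟨m₀, _, hm₀⟩ := Finset.exists_min_image Finset.univ c
    ⟨⟨0, hK⟩, Finset.mem_univ _⟩
  set ε : ℝ := c m₀ / 2 with hεdef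
  have hε : 0 < ε := by have := hc0 m₀; positivity
  have hπpos : 0 < Real.pi := Real.pi_pos
  set s : ℝ := Real.sqrt (ε / (2 * Real.pi)) with hsdef
  have hs : 0 < s := Real.sqrt_pos.mpr (by positivity)
  set g : Fin n → ℝ → ℝ := fun _ t => s * Real.exp (-(ε / 2) * t ^ 2) with hgdef
  set M : ℝ := (∑ m, π m * ((2 * Real.pi) ^ (-(n : ℝ) / 2) * (S m).det ^ (-(1 : ℝ) / 2)
      * Real.exp (c m * (∑ i, μ m i ^ 2) / 2))) * (s ^ n)⁻¹ with hMdef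
  refine ⟨g, M, fun i t => by positivity, fun i => by fun_prop, fun i => ?_, fun x => ?_⟩
  · -- each g i is a probability density
    rw [hgdef]
    simp only
    rw [MeasureTheory.integral_const_mul, integral_gaussian (ε / 2), hsdef,
      ← Real.sqrt_mul (by positivity)]
    rw [show ε / (2 * Real.pi) * (Real.pi / (ε / 2)) = 1 by
      field_simp]
    exact Real.sqrt_one
  · -- the domination
    have hprod : ∏ i, g i (x i) = s ^ n * Real.exp (-(ε / 2) * ∑ i, x i ^ 2) := by
      rw [hgdef]
      simp only
      rw [Finset.prod_mul_distrib, Finset.prod_const, Finset.card_univ, Fintype.card_fin,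
        ← Real.exp_sum, ← Finset.mul_sum]
    rw [hp x, hprod]
    have key : ∀ m : Fin K,
        π m * ((2 * Real.pi) ^ (-(n : ℝ) / 2) * (S m).det ^ (-(1 : ℝ) / 2)
          * Real.exp (-(dotProduct (x - μ m) ((S m)⁻¹.mulVec (x - μ m))) / 2))
        ≤ (π m * ((2 * Real.pi) ^ (-(n : ℝ) / 2) * (S m).det ^ (-(1 : ℝ) / 2)
          * Real.exp (c m * (∑ i, μ m i ^ 2) / 2))) * Real.exp (-(ε / 2) * ∑ i, x i ^ 2) := by
      intro m
      have hq := hc m (x - μ m)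
      simp only [Pi.sub_apply] at hq
      have hsum : ∑ i, (x i ^ 2 / 2 - μ m i ^ 2) ≤ ∑ i, (x i - μ m i) ^ 2 :=
        Finset.sum_le_sum fun i _ => by nlinarith [sq_nonneg (x i - 2 * μ m i)]
      rw [Finset.sum_sub_distrib, ← Finset.sum_div] at hsum
      have hεle : ε ≤ c m / 2 := by
        have := hm₀ m (Finset.mem_univ m); rw [hεdef]; linarith
      have hx2 : (0:ℝ) ≤ ∑ i, x i ^ 2 := by positivity
      have h1 : c m * ((∑ i, x i ^ 2) / 2 - ∑ i, μ m i ^ 2)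
          ≤ c m * ∑ i, (x i - μ m i) ^ 2 :=
        mul_le_mul_of_nonneg_left hsum (hc0 m).le
      have h3 : ε * ∑ i, x i ^ 2 ≤ (c m / 2) * ∑ i, x i ^ 2 :=
        mul_le_mul_of_nonneg_right hεle hx2
      have hexp : Real.exp (-(dotProduct (x - μ m) ((S m)⁻¹.mulVec (x - μ m))) / 2)
          ≤ Real.exp (c m * (∑ i, μ m i ^ 2) / 2) * Real.exp (-(ε / 2) * ∑ i, x i ^ 2) := by
        rw [← Real.exp_add, Real.exp_le_exp]
        linarith
      have hA : (0:ℝ) ≤ π m * ((2 * Real.pi) ^ (-(n : ℝ) / 2) * (S m).det ^ (-(1 : ℝ) / 2)) :=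
        mul_nonneg (hπ0 m) (mul_nonneg (by positivity)
          (Real.rpow_pos_of_pos (hS m).det_pos _).le)
      calc π m * ((2 * Real.pi) ^ (-(n : ℝ) / 2) * (S m).det ^ (-(1 : ℝ) / 2)
            * Real.exp (-(dotProduct (x - μ m) ((S m)⁻¹.mulVec (x - μ m))) / 2))
          = (π m * ((2 * Real.pi) ^ (-(n : ℝ) / 2) * (S m).det ^ (-(1 : ℝ) / 2)))
            * Real.exp (-(dotProduct (x - μ m) ((S m)⁻¹.mulVec (x - μ m))) / 2) := by
            ring
        _ ≤ (π m * ((2 * Real.pi) ^ (-(n : ℝ) / 2) * (S m).det ^ (-(1 : ℝ) / 2)))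
            * (Real.exp (c m * (∑ i, μ m i ^ 2) / 2) * Real.exp (-(ε / 2) * ∑ i, x i ^ 2)) :=
            mul_le_mul_of_nonneg_left hexp hA
        _ = _ := by ring
    calc (∑ m, π m * ((2 * Real.pi) ^ (-(n : ℝ) / 2) * (S m).det ^ (-(1 : ℝ) / 2)
          * Real.exp (-(dotProduct (x - μ m) ((S m)⁻¹.mulVec (x - μ m))) / 2)))
        ≤ ∑ m, (π m * ((2 * Real.pi) ^ (-(n : ℝ) / 2) * (S m).det ^ (-(1 : ℝ) / 2)
          * Real.exp (c m * (∑ i, μ m i ^ 2) / 2))) * Real.exp (-(ε / 2) * ∑ i, x i ^ 2) :=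
          Finset.sum_le_sum fun m _ => key m
      _ = (∑ m, π m * ((2 * Real.pi) ^ (-(n : ℝ) / 2) * (S m).det ^ (-(1 : ℝ) / 2)
          * Real.exp (c m * (∑ i, μ m i ^ 2) / 2))) * Real.exp (-(ε / 2) * ∑ i, x i ^ 2) :=
          (Finset.sum_mul _ _ _).symm
      _ = M * (s ^ n * Real.exp (-(ε / 2) * ∑ i, x i ^ 2)) := by
          rw [hMdef]
          field_simp
          exact Finset.sum_congr rfl fun m _ => by ring
end

section
/- Let q = Σ_{k=1}^K w_k q^k be a finite mixture of probability densities q^k on ℝ^n, where w_k > 0 and Σ_k w_k = 1. Assume that x ↦ q(x)·log q(x) is integrable and that for all j, k the overlap integrals ∫ q^k(x) q^j(x) dx are finite, with Σ_j w_j ∫ q^k q^j > 0 for each k. Then the differential entropy of the mixture is bounded below by the Jensen entropy approximation: H[q] ≥ −Σ_{k=1}^K w_k · log( Σ_{j=1}^K w_j ∫ q^k(x) q^j(x) dx ). -/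
open MeasureTheory

/-- **The Jensen (NPVI) entropy approximation lower-bounds the mixture entropy.**
Let `q = Σ_k w_k q^k` be a finite mixture of probability densities on `ℝ^n` with positive
weights summing to one.  If `x ↦ q x * log (q x)` is integrable, the overlap integrals
`∫ q^k q^j` are finite (integrable), and `Σ_j w_j ∫ q^k q^j > 0` for each `k`, then
`H[q] ≥ −Σ_k w_k log (Σ_j w_j ∫ q^k q^j)`. -/
theorem mixture_entropy_ge_jensen
    {n : ℕ} (K : ℕ)
    (w : Fin K → ℝ) (hw : ∀ k, 0 < w k) (hw1 : ∑ k, w k = 1)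
    -- the mixture components are probability densities on `ℝ^n`
    (qk : Fin K → (Fin n → ℝ) → ℝ)
    (hqk0 : ∀ k x, 0 ≤ qk k x) (hqkm : ∀ k, Measurable (qk k))
    (hqk1 : ∀ k, ∫ x, qk k x = 1)
    -- integrability of `q log q`
    (hqlogq : Integrable fun x => (∑ k, w k * qk k x) * Real.log (∑ k, w k * qk k x))
    -- overlap integrals are finite
    (hover : ∀ k j, Integrable fun x => qk k x * qk j x)
    -- and positive when mixed with the weights
    (hoverpos : ∀ k, 0 < ∑ j, w j * ∫ x, qk k x * qk j x) :
    -(∫ x, (∑ k, w k * qk k x) * Real.log (∑ k, w k * qk k x))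
      ≥ -∑ k, w k * Real.log (∑ j, w j * ∫ x, qk k x * qk j x) := by
  classical
  set q : (Fin n → ℝ) → ℝ := fun x => ∑ k, w k * qk k x with hqdef
  set c : Fin K → ℝ := fun k => ∑ j, w j * ∫ x, qk k x * qk j x with hcdef
  have hqm : Measurable q := Finset.measurable_sum _ fun k _ => (hqkm k).const_mul _
  have hq0 : ∀ x, 0 ≤ q x := fun x =>
    Finset.sum_nonneg fun k _ => mul_nonneg (hw k).le (hqk0 k x)
  have hle : ∀ k x, w k * qk k x ≤ q x := fun k x =>
    Finset.single_le_sum (fun j _ => mul_nonneg (hw j).le (hqk0 j x)) (Finset.mem_univ k)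
  have hqint : ∀ k, Integrable (qk k) := by
    intro k
    by_contra h
    exact one_ne_zero ((hqk1 k).symm.trans (integral_undef h))
  -- integrability of qk k * q
  have hqq_eq : ∀ k, (fun x => qk k x * q x) = fun x => ∑ j, w j * (qk k x * qk j x) := by
    intro k
    funext x
    simp only [hqdef, Finset.mul_sum]
    exact Finset.sum_congr rfl fun j _ => by ring
  have hqq : ∀ k, Integrable (fun x => qk k x * q x) := by
    intro k
    rw [hqq_eq k]
    exact integrable_finset_sum _ fun j _ => ((hover k j).const_mul _)
  have hqqint : ∀ k, ∫ x, qk k x * q x = c k := by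
    intro k
    rw [hqq_eq k]
    rw [integral_finset_sum _ fun j _ => ((hover k j).const_mul _)]
    exact Finset.sum_congr rfl fun j _ => integral_const_mul _ _
  -- integrability of qk k * log q
  have hlogint : ∀ k, Integrable (fun x => qk k x * Real.log (q x)) := by
    intro k
    refine (hqlogq.abs.const_mul (w k)⁻¹).mono
      ((hqkm k).mul (Real.measurable_log.comp hqm)).aestronglyMeasurable
      (Filter.Eventually.of_forall fun x => ?_)
    have h1 : qk k x ≤ (w k)⁻¹ * q x := by
      rw [le_inv_mul_iff₀ (hw k)]
      exact hle k x
    have h2 : |qk k x * Real.log (q x)| = qk k x * |Real.log (q x)| := by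
      rw [abs_mul, abs_of_nonneg (hqk0 k x)]
    calc ‖qk k x * Real.log (q x)‖ = qk k x * |Real.log (q x)| := by
          rw [Real.norm_eq_abs, h2]
      _ ≤ ((w k)⁻¹ * q x) * |Real.log (q x)| :=
          mul_le_mul_of_nonneg_right h1 (abs_nonneg _)
      _ = (w k)⁻¹ * |q x * Real.log (q x)| := by
          rw [abs_mul, abs_of_nonneg (hq0 x)]; ring
      _ ≤ ‖(w k)⁻¹ * |q x * Real.log (q x)|‖ := le_abs_self _
  -- key per-component inequality
  have key : ∀ k, ∫ x, qk k x * Real.log (q x) ≤ Real.log (c k) := by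
    intro k
    have hck : 0 < c k := hoverpos k
    have hpt : ∀ x, qk k x * Real.log (q x) ≤
        qk k x * Real.log (c k) + qk k x * q x / c k - qk k x := by
      intro x
      rcases eq_or_lt_of_le (hqk0 k x) with h0 | h0
      · simp [← h0]
      · have hqx : 0 < q x := lt_of_lt_of_le (mul_pos (hw k) h0) (hle k x)
        have hlog : Real.log (q x) ≤ Real.log (c k) + (q x / c k - 1) := by
          have h := Real.log_le_sub_one_of_pos (div_pos hqx hck)
          rw [Real.log_div hqx.ne' hck.ne'] at h
          linarith
        have hmul := mul_le_mul_of_nonneg_left hlog (hqk0 k x)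
        have h2 : qk k x * (Real.log (c k) + (q x / c k - 1)) =
            qk k x * Real.log (c k) + qk k x * q x / c k - qk k x := by ring
        linarith
    have hrhs : Integrable (fun x =>
        qk k x * Real.log (c k) + qk k x * q x / c k - qk k x) :=
      (((hqint k).mul_const _).add ((hqq k).div_const _)).sub (hqint k)
    have hineq := integral_mono (hlogint k) hrhs hpt
    have e1 : Integrable (fun x => qk k x * Real.log (c k) + qk k x * q x / c k) :=
      ((hqint k).mul_const _).add ((hqq k).div_const _)
    have hval : ∫ x, (qk k x * Real.log (c k) + qk k x * q x / c k - qk k x) =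
        Real.log (c k) := by
      simp only [integral_sub e1 (hqint k),
        integral_add ((hqint k).mul_const _) ((hqq k).div_const _),
        integral_mul_const, integral_div, hqqint k, hqk1 k]
      rw [div_self hck.ne']
      ring
    rw [hval] at hineq
    exact hineq
  -- assemble
  have hsum_eq : (fun x => q x * Real.log (q x)) =
      fun x => ∑ k, w k * (qk k x * Real.log (q x)) := by
    funext x
    rw [hqdef]
    simp only [Finset.sum_mul]
    exact Finset.sum_congr rfl fun k _ => by ring
  have hint_eq : ∫ x, q x * Real.log (q x) = ∑ k, w k * ∫ x, qk k x * Real.log (q x) := by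
    rw [hsum_eq, integral_finset_sum _ fun k _ => ((hlogint k).const_mul _)]
    exact Finset.sum_congr rfl fun k _ => integral_const_mul _ _
  have hfinal : ∫ x, q x * Real.log (q x) ≤ ∑ k, w k * Real.log (c k) := by
    rw [hint_eq]
    exact Finset.sum_le_sum fun k _ => mul_le_mul_of_nonneg_left (key k) (hw k).le
  exact neg_le_neg hfinal
end
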